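/- There exists a single computable predictor that learns to predict every primitive recursive binary sequence: there is a computable p : List Bool → Bool such that for every ω : ℕ → Bool with ω primitive recursive (Primrec ω), p learns to predict ω. -/

import Mathlib

/-!
Learning by enumeration. The codes in `Nat.Partrec.Code` that avoid `rfind'` denote total
functions, form a primitive recursive set, and include a code of every primitive recursive
function; evaluating them gives a computable list `F 0, F 1, …` of binary sequences containing
every primitive recursive one. On a prefix of length `n` the predictor follows the first `F e`
extending that prefix. If `ω = F e₀`, every `F e ≠ ω` with `e < e₀` is refuted by some finite
prefix of `ω` while `F e₀` never is, so eventually the chosen `F e` equals `ω`.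
-/

/-- The length-`n` prefix `[ω 0, …, ω (n−1)]` of a binary sequence `ω`. -/
def prefixList (ω : ℕ → Bool) (n : ℕ) : List Bool := (List.range n).map ω

/-- A predictor `p` learns to predict the sequence `ω` if from some point on it
always predicts the next symbol correctly. -/
def LearnsToPredict (p : List Bool → Bool) (ω : ℕ → Bool) : Prop :=
  ∃ m : ℕ, ∀ n ≥ m, p (prefixList ω n) = ω n

open Filter

theorem length_prefixList (ω : ℕ → Bool) (n : ℕ) : (prefixList ω n).length = n := by
  simp [prefixList]

theorem prefixList_succ (ω : ℕ → Bool) (n : ℕ) :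
    prefixList ω (n + 1) = prefixList ω n ++ [ω n] := by
  simp [prefixList, List.range_succ]

theorem prefixList_eq_prefixList_iff {ω ω' : ℕ → Bool} {n : ℕ} :
    prefixList ω n = prefixList ω' n ↔ ∀ i < n, ω i = ω' i := by
  simp [prefixList, List.map_inj_left]

theorem eventually_eq_of_prefixList_eq (ω ω' : ℕ → Bool) :
    ∀ᶠ n in atTop, prefixList ω n = prefixList ω' n → ω = ω' := by
  by_cases h : ω = ω'
  · exact .of_forall fun _ _ => h
  obtain ⟨i, hi⟩ := Function.ne_iff.1 h
  filter_upwards [eventually_gt_atTop i] with n hn heq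
  exact absurd (prefixList_eq_prefixList_iff.1 heq i hn) hi

theorem learnsToPredict_iff_eventually {p : List Bool → Bool} {ω : ℕ → Bool} :
    LearnsToPredict p ω ↔ ∀ᶠ n in atTop, p (prefixList ω n) = ω n :=
  eventually_atTop.symm

theorem Computable₂.prefixList {α : Type*} [Primcodable α] {F : α → ℕ → Bool}
    (hF : Computable₂ F) : Computable₂ fun a n => prefixList (F a) n := by
  refine (Computable.nat_rec Computable.snd (Computable.const [])
    (Computable.list_concat.comp (Computable.snd.comp Computable.snd)
      (hF.comp (Computable.fst.comp Computable.fst)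
        (Computable.fst.comp Computable.snd))).to₂).of_eq fun ⟨a, n⟩ => ?_
  induction n with
  | zero => rfl
  | succ n ih => simp [prefixList_succ, ← ih]

section Enumeration

variable (F : ℕ → ℕ → Bool)

theorem exists_prefixList_eq_or_lt (l : List Bool) :
    ∃ e, prefixList (F e) l.length = l ∨ l.length < e :=
  ⟨l.length + 1, .inr l.length.lt_succ_self⟩

/-- The disjunct `l.length < e` only serves to make the search terminate. -/
def firstConsistent (l : List Bool) : ℕ := Nat.find (exists_prefixList_eq_or_lt F l)

def enumPredictor (l : List Bool) : Bool := F (firstConsistent F l) l.length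

variable {F}

theorem firstConsistent_le {l : List Bool} {e : ℕ} (h : prefixList (F e) l.length = l) :
    firstConsistent F l ≤ e :=
  Nat.find_min' _ (.inl h)

theorem prefixList_firstConsistent {l : List Bool} {e : ℕ} (he : e ≤ l.length)
    (h : prefixList (F e) l.length = l) :
    prefixList (F (firstConsistent F l)) l.length = l :=
  (Nat.find_spec (exists_prefixList_eq_or_lt F l)).resolve_right
    (not_lt.2 ((firstConsistent_le h).trans he))

theorem learnsToPredict_enumPredictor (e₀ : ℕ) : LearnsToPredict (enumPredictor F) (F e₀) := by
  rw [learnsToPredict_iff_eventually]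
  have hrefuted : ∀ᶠ n in atTop, ∀ e ∈ Finset.range e₀,
      prefixList (F e) n = prefixList (F e₀) n → F e = F e₀ :=
    (eventually_all_finset _).2 fun e _ => eventually_eq_of_prefixList_eq _ _
  filter_upwards [eventually_ge_atTop e₀, hrefuted] with n hn hrefuted
  set l := prefixList (F e₀) n
  have hlen : l.length = n := length_prefixList _ _
  have hcons₀ : prefixList (F e₀) l.length = l := by rw [hlen]
  have hcons := prefixList_firstConsistent (hlen ▸ hn) hcons₀
  rw [hlen] at hcons
  have heq : F (firstConsistent F l) = F e₀ := by
    rcases (firstConsistent_le hcons₀).lt_or_eq with hlt | heq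
    · exact hrefuted _ (Finset.mem_range.2 hlt) hcons
    · rw [heq]
  rw [enumPredictor, heq, hlen]

theorem computable_firstConsistent (hF : Computable₂ F) : Computable (firstConsistent F) := by
  have hp : Computable₂ fun (l : List Bool) (e : ℕ) =>
      decide (prefixList (F e) l.length = l ∨ l.length < e) := by
    have hlen : Computable fun x : List Bool × ℕ => x.1.length :=
      Computable.list_length.comp Computable.fst
    refine (Primrec.or.to_comp.comp
      (Primrec.eq.decide.to_comp.comp (hF.prefixList.comp Computable.snd hlen) Computable.fst)
      (Primrec.nat_lt.decide.to_comp.comp hlen Computable.snd)).of_eq fun _ => ?_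
    exact (Bool.decide_or _ _).symm
  refine (Partrec.rfind hp.partrec₂).of_eq_tot fun l => Nat.mem_rfind.2
    ⟨Part.mem_some_iff.2 (decide_eq_true (Nat.find_spec (exists_prefixList_eq_or_lt F l))).symm,
      fun hm => Part.mem_some_iff.2 (decide_eq_false (Nat.find_min _ hm)).symm⟩

theorem computable_enumPredictor (hF : Computable₂ F) : Computable (enumPredictor F) :=
  hF.comp (computable_firstConsistent hF) Computable.list_length

end Enumeration

namespace Nat.Partrec.Code

def isPrimitive : Code → Bool
  | zero | succ | left | right => true
  | pair cf cg | comp cf cg | prec cf cg => cf.isPrimitive && cg.isPrimitive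
  | rfind' _ => false

theorem primrec_isPrimitive : Primrec isPrimitive := by
  have hand : Primrec fun a : Code × Code × Code × Bool × Bool => a.2.2.2.1 && a.2.2.2.2 :=
    Primrec.and.comp (Primrec.fst.comp (Primrec.snd.comp (Primrec.snd.comp Primrec.snd)))
      (Primrec.snd.comp (Primrec.snd.comp (Primrec.snd.comp Primrec.snd)))
  refine (primrec_recOn (c := id) (z := fun _ => true) (s := fun _ => true) (l := fun _ => true)
    (r := fun _ => true) (pr := fun _ _ _ b₁ b₂ => b₁ && b₂) (co := fun _ _ _ b₁ b₂ => b₁ && b₂)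
    (pc := fun _ _ _ b₁ b₂ => b₁ && b₂) (rf := fun _ _ _ => false) _root_.Primrec.id
    (_root_.Primrec.const _) (_root_.Primrec.const _) (_root_.Primrec.const _)
    (_root_.Primrec.const _) hand hand hand (_root_.Primrec.const _)).of_eq fun c => ?_
  induction c <;> simp_all [isPrimitive]

section TotalEval

variable {cf cg : Code} {f g : ℕ → ℕ}

theorem eval_pair_of_eq (hf : eval cf = f) (hg : eval cg = g) :
    eval (pair cf cg) = ((fun n => Nat.pair (f n) (g n) : ℕ → ℕ) : ℕ →. ℕ) := by
  funext n
  simp [eval, hf, hg, Seq.seq]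

theorem eval_comp_of_eq (hf : eval cf = f) (hg : eval cg = g) :
    eval (comp cf cg) = ((fun n => f (g n) : ℕ → ℕ) : ℕ →. ℕ) := by
  funext n
  show (eval cg n).bind (eval cf) = _
  rw [hg, hf]
  exact Part.bind_some _ _

theorem eval_prec_of_eq (hf : eval cf = f) (hg : eval cg = g) :
    eval (prec cf cg) =
      ((Nat.unpaired fun z n => n.rec (f z) fun y IH => g (Nat.pair z (Nat.pair y IH)) :
        ℕ → ℕ) : ℕ →. ℕ) := by
  funext n
  rw [← Nat.pair_unpair n]
  generalize n.unpair.1 = a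
  generalize n.unpair.2 = k
  induction k with
  | zero => simp [hf]
  | succ k ih => simp [eval_prec_succ, ih, hg]

end TotalEval

theorem exists_eval_eq_of_isPrimitive {c : Code} (hc : c.isPrimitive) :
    ∃ f : ℕ → ℕ, eval c = f := by
  induction c with
  | zero => exact ⟨fun _ => 0, rfl⟩
  | succ => exact ⟨Nat.succ, rfl⟩
  | left => exact ⟨fun n => n.unpair.1, rfl⟩
  | right => exact ⟨fun n => n.unpair.2, rfl⟩
  | pair cf cg ihf ihg =>
    obtain ⟨hcf, hcg⟩ := Bool.and_eq_true_iff.1 hc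
    obtain ⟨f, hf⟩ := ihf hcf
    obtain ⟨g, hg⟩ := ihg hcg
    exact ⟨_, eval_pair_of_eq hf hg⟩
  | comp cf cg ihf ihg =>
    obtain ⟨hcf, hcg⟩ := Bool.and_eq_true_iff.1 hc
    obtain ⟨f, hf⟩ := ihf hcf
    obtain ⟨g, hg⟩ := ihg hcg
    exact ⟨_, eval_comp_of_eq hf hg⟩
  | prec cf cg ihf ihg =>
    obtain ⟨hcf, hcg⟩ := Bool.and_eq_true_iff.1 hc
    obtain ⟨f, hf⟩ := ihf hcf
    obtain ⟨g, hg⟩ := ihg hcg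
    exact ⟨_, eval_prec_of_eq hf hg⟩
  | rfind' => exact absurd hc Bool.false_ne_true

theorem exists_isPrimitive_eval_eq {f : ℕ → ℕ} (hf : Nat.Primrec f) :
    ∃ c : Code, c.isPrimitive ∧ eval c = f := by
  induction hf with
  | zero => exact ⟨zero, rfl, rfl⟩
  | succ => exact ⟨succ, rfl, rfl⟩
  | left => exact ⟨left, rfl, rfl⟩
  | right => exact ⟨right, rfl, rfl⟩
  | pair _ _ ihf ihg =>
    obtain ⟨cf, hcf, hf⟩ := ihf
    obtain ⟨cg, hcg, hg⟩ := ihg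
    exact ⟨pair cf cg, by simp [isPrimitive, hcf, hcg], eval_pair_of_eq hf hg⟩
  | comp _ _ ihf ihg =>
    obtain ⟨cf, hcf, hf⟩ := ihf
    obtain ⟨cg, hcg, hg⟩ := ihg
    exact ⟨comp cf cg, by simp [isPrimitive, hcf, hcg], eval_comp_of_eq hf hg⟩
  | prec _ _ ihf ihg =>
    obtain ⟨cf, hcf, hf⟩ := ihf
    obtain ⟨cg, hcg, hg⟩ := ihg
    exact ⟨prec cf cg, by simp [isPrimitive, hcf, hcg], eval_prec_of_eq hf hg⟩

def toPrimitive (c : Code) : Code := bif c.isPrimitive then c else zero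

theorem isPrimitive_toPrimitive (c : Code) : c.toPrimitive.isPrimitive := by
  cases h : c.isPrimitive <;> simp [toPrimitive, h, isPrimitive]

theorem toPrimitive_of_isPrimitive {c : Code} (hc : c.isPrimitive) : c.toPrimitive = c := by
  simp [toPrimitive, hc]

theorem primrec_toPrimitive : Primrec toPrimitive :=
  Primrec.cond primrec_isPrimitive _root_.Primrec.id (_root_.Primrec.const zero)

theorem eval_toPrimitive_dom (c : Code) (n : ℕ) : (eval c.toPrimitive n).Dom := by
  obtain ⟨f, hf⟩ := exists_eval_eq_of_isPrimitive (isPrimitive_toPrimitive c)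
  rw [hf]
  trivial

def evalPrimitive (c : Code) (n : ℕ) : ℕ :=
  (eval c.toPrimitive n).get (eval_toPrimitive_dom c n)

theorem computable_evalPrimitive : Computable₂ evalPrimitive :=
  (eval_part.comp (primrec_toPrimitive.to_comp.comp Computable.fst) Computable.snd).of_eq_tot
    fun _ => Part.get_mem _

theorem exists_evalPrimitive_eq {f : ℕ → ℕ} (hf : Nat.Primrec f) :
    ∃ c, evalPrimitive c = f := by
  obtain ⟨c, hc, hcf⟩ := exists_isPrimitive_eval_eq hf
  refine ⟨c, funext fun n => ?_⟩
  simp [evalPrimitive, toPrimitive_of_isPrimitive hc, hcf]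

end Nat.Partrec.Code

open Nat.Partrec in
def primrecSeq (e i : ℕ) : Bool := (Code.evalPrimitive (Denumerable.ofNat Code e) i).bodd

theorem computable_primrecSeq : Computable₂ primrecSeq :=
  Primrec.nat_bodd.to_comp.comp (Nat.Partrec.Code.computable_evalPrimitive.comp
    ((Primrec.ofNat _).to_comp.comp Computable.fst) Computable.snd)

theorem exists_primrecSeq_eq {ω : ℕ → Bool} (hω : Primrec ω) : ∃ e, primrecSeq e = ω := by
  obtain ⟨c, hc⟩ :=
    Nat.Partrec.Code.exists_evalPrimitive_eq (Primrec.nat_iff.1 (Primrec.encode.comp hω))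
  refine ⟨Encodable.encode c, funext fun i => ?_⟩
  simp only [primrecSeq, Denumerable.ofNat_encode, hc]
  cases ω i <;> rfl

/-- A single computable predictor learns every primitive recursive binary
sequence. -/
theorem stmt_7 :
    ∃ p : List Bool → Bool, Computable p ∧
      ∀ ω : ℕ → Bool, Primrec ω → LearnsToPredict p ω := by
  refine ⟨enumPredictor primrecSeq, computable_enumPredictor computable_primrecSeq,
    fun ω hω => ?_⟩
  obtain ⟨e, rfl⟩ := exists_primrecSeq_eq hω
  exact learnsToPredict_enumPredictor e
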